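/- arXiv:2105.14532 — 5 statements merged into one kernel-verified Lean document; each statement's English description precedes it below -/
import Mathlib

section
/- Over the rational function field ℚ(z), the quadratic polynomial R_5(X, -(z^2+4)/(z+11)) in X factors as (X + (z^2+12z+16)^3/(z+11)) · (X + (z^2-228z+496)^3/(z+11)^5). -/
/-! By Vieta, a monic quadratic factors as `(X + a) * (X + b)` once its coefficients are
`a + b` and `a * b`; for the given `a`, `b` and `Y` these are two identities of rational
functions in `z`, which become polynomial identities after clearing `(z + 11) ^ 6`. -/

open Polynomial

theorem X_sq_sub_C_mul_X_add_C_eq_mul {R : Type*} [CommRing R] {s p a b : R}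
    (hs : a + b = -s) (hp : a * b = p) :
    (X ^ 2 - C s * X + C p : R[X]) = (X + C a) * (X + C b) := by
  rw [neg_eq_iff_eq_neg.mp hs.symm, ← hp, map_neg, map_add, map_mul]
  ring

section
variable {K : Type*} [Field K] {z Y : K}

theorem R5_root_sum_eq (hz : z + 11 ≠ 0) (hY : Y = -(z ^ 2 + 4) / (z + 11)) :
    (z ^ 2 + 12 * z + 16) ^ 3 / (z + 11) + (z ^ 2 - 228 * z + 496) ^ 3 / (z + 11) ^ 5
      = -(Y ^ 5 - 80 * Y ^ 4 + 1890 * Y ^ 3 - 12600 * Y ^ 2 + 7776 * Y + 3456) := by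
  subst hY
  field_simp
  ring

theorem R5_root_prod_eq (hz : z + 11 ≠ 0) (hY : Y = -(z ^ 2 + 4) / (z + 11)) :
    (z ^ 2 + 12 * z + 16) ^ 3 / (z + 11) * ((z ^ 2 - 228 * z + 496) ^ 3 / (z + 11) ^ 5)
      = (Y ^ 2 + 216 * Y + 144) ^ 3 := by
  subst hY
  field_simp
  ring

end

/-- Over `ℚ(z)`, the quadratic polynomial `R_5(X, -(z^2+4)/(z+11))` in `X` factors as
`(X + (z^2+12z+16)^3/(z+11)) * (X + (z^2-228z+496)^3/(z+11)^5)`. -/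
theorem R5_factorization :
    let z : RatFunc ℚ := RatFunc.X
    let Y : RatFunc ℚ := -(z ^ 2 + 4) / (z + 11)
    (X ^ 2
        - C (Y ^ 5 - 80 * Y ^ 4 + 1890 * Y ^ 3 - 12600 * Y ^ 2 + 7776 * Y + 3456) * X
        + C ((Y ^ 2 + 216 * Y + 144) ^ 3) : Polynomial (RatFunc ℚ))
      = (X + C ((z ^ 2 + 12 * z + 16) ^ 3 / (z + 11)))
          * (X + C ((z ^ 2 - 228 * z + 496) ^ 3 / (z + 11) ^ 5)) := by
  intro z Y
  have hz : z + 11 ≠ 0 := by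
    simpa using RatFunc.algebraMap_ne_zero (K := ℚ) (X_add_C_ne_zero 11)
  exact X_sq_sub_C_mul_X_add_C_eq_mul (R5_root_sum_eq hz rfl) (R5_root_prod_eq hz rfl)
end

section
/- The algebraic number j = -32^3 · 3^3 · √5 · ((69 + 31√5)/2)^3 is a root of X^2 + 654403829760X + 5209253090426880, and this polynomial is irreducible over ℚ. -/
/-!
Writing `s = √5`, the relation `s² = 5` reduces `j` to `(-b - k s)/2` with `b = 654403829760` and
`k = 292658282496`, and the discriminant `b² - 4c` of the quadratic equals `5 k²`. Hence `j` is a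
root by the quadratic formula, and since `5 k²` is not a square in `ℚ` the quadratic has no
rational root, which for a polynomial of degree two means it is irreducible.
-/

open Polynomial

theorem Polynomial.irreducible_X_sq_add_C_mul_X_add_C {K : Type*} [Field K] {b c : K}
    (h : ¬IsSquare (discrim 1 b c)) : Irreducible (X ^ 2 + C b * X + C c) := by
  have hdeg : (X ^ 2 + C b * X + C c).natDegree = 2 := by compute_degree!
  refine irreducible_of_degree_le_three_of_not_isRoot (by simp [hdeg]) fun x hx ↦ h ?_
  have hx : 1 * (x * x) + b * x + c = 0 := by
    simpa [sq] using hx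
  exact ⟨2 * 1 * x + b, by rw [discrim_eq_sq_of_quadratic_eq_zero hx, sq]⟩

theorem quadratic_eq_zero_of_discrim_eq_mul_sq {b c d k : ℝ} (hd : 0 ≤ d)
    (h : discrim 1 b c = d * k ^ 2) :
    ((-b - k * √d) / 2) ^ 2 + b * ((-b - k * √d) / 2) + c = 0 := by
  rw [discrim] at h
  linear_combination (-1 / 4 : ℝ) * h + (k ^ 2 / 4) * Real.sq_sqrt hd

theorem j_neg75_eq :
    -(32 ^ 3) * 3 ^ 3 * √5 * ((69 + 31 * √5) / 2) ^ 3
      = (-654403829760 - 292658282496 * √5) / 2 := by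
  linear_combination (-110592 * (29791 * √5 ^ 2 + 198927 * √5 + 591728))
    * Real.sq_sqrt (show (0 : ℝ) ≤ 5 by norm_num)

/-- The algebraic number `j = -32^3 · 3^3 · √5 · ((69 + 31√5)/2)^3` is a root of
`X^2 + 654403829760 X + 5209253090426880 = H_{-75}(X)`, and this polynomial is
irreducible over `ℚ`. -/
theorem H75_root_and_irreducible :
    ((-(32 ^ 3) * 3 ^ 3 * Real.sqrt 5 * ((69 + 31 * Real.sqrt 5) / 2) ^ 3) ^ 2
        + 654403829760 * (-(32 ^ 3) * 3 ^ 3 * Real.sqrt 5 * ((69 + 31 * Real.sqrt 5) / 2) ^ 3)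
        + 5209253090426880 = 0) ∧
    Irreducible (X ^ 2 + 654403829760 * X + 5209253090426880 : Polynomial ℚ) := by
  constructor
  · rw [j_neg75_eq]
    exact quadratic_eq_zero_of_discrim_eq_mul_sq (by norm_num) (by norm_num [discrim])
  · have := irreducible_X_sq_add_C_mul_X_add_C (b := (654403829760 : ℚ))
      (c := 5209253090426880) (by norm_num [discrim])
    simpa only [map_ofNat] using this
end

section
/- With z = (8d^3 - 15d^2 - 9d + 8)/(d^3 - 8d^2 + 5d + 1) in the rational function field ℚ(d), the identity (z^2-3z+9)(z^2+229z+505)^3/(z-8)^7 = (d^2-d+1)^3 (d^6-11d^5+30d^4-15d^3-10d^2+5d+1)^3 / ((d^3-8d^2+5d+1)(d-1)^7 d^7) holds. -/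
/-!
Write `z = N / B` with `N = 8d³ - 15d² - 9d + 8` and `B = d³ - 8d² + 5d + 1`. Clearing
denominators, the three factors of the left-hand side become binary forms in `(N, B)`, which
specialize to `N² - 3NB + 9B² = 49 (d² - d + 1)³`, `N² + 229NB + 505B² = 2401 P₆` (with `P₆` the
sextic on the right-hand side) and `N - 8B = 49 d (d - 1)`. The powers of `7` then cancel, because
`49 · 2401³ = 49⁷`. The only non-vanishing needed is `B ≠ 0`, which holds in `ℚ(d)` because `B` is
a nonzero polynomial.
-/

open Polynomial

section

variable {K : Type*} [Field K]

/-- `j` as a rational function of degree `8 = [SL₂(ℤ) : Γ₀(7)]` in a Hauptmodul `z` of `X₀(7)`,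
with poles of order `7` and `1` at the cusps `z = 8` and `z = ∞`. -/
def j7Map (z : K) : K :=
  (z ^ 2 - 3 * z + 9) * (z ^ 2 + 229 * z + 505) ^ 3 / (z - 8) ^ 7

theorem j7Map_div (N : K) {B : K} (hB : B ≠ 0) :
    j7Map (N / B) = (N ^ 2 - 3 * N * B + 9 * B ^ 2) * (N ^ 2 + 229 * N * B + 505 * B ^ 2) ^ 3
      / (B * (N - 8 * B) ^ 7) := by
  have hz8 : N / B - 8 = (N - 8 * B) / B := by field_simp
  by_cases h8 : N - 8 * B = 0
  · -- both sides are junk `x / 0 = 0`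
    simp [j7Map, hz8, h8]
  · have hz8_ne : N / B - 8 ≠ 0 := hz8 ▸ div_ne_zero h8 hB
    unfold j7Map
    field_simp

theorem j7Map_tate7 {d : K} (h7 : (7 : K) ≠ 0) (hB : d ^ 3 - 8 * d ^ 2 + 5 * d + 1 ≠ 0) :
    j7Map ((8 * d ^ 3 - 15 * d ^ 2 - 9 * d + 8) / (d ^ 3 - 8 * d ^ 2 + 5 * d + 1))
      = (d ^ 2 - d + 1) ^ 3
          * (d ^ 6 - 11 * d ^ 5 + 30 * d ^ 4 - 15 * d ^ 3 - 10 * d ^ 2 + 5 * d + 1) ^ 3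
          / ((d ^ 3 - 8 * d ^ 2 + 5 * d + 1) * (d - 1) ^ 7 * d ^ 7) := by
  set B := d ^ 3 - 8 * d ^ 2 + 5 * d + 1
  set N := 8 * d ^ 3 - 15 * d ^ 2 - 9 * d + 8
  set P := d ^ 6 - 11 * d ^ 5 + 30 * d ^ 4 - 15 * d ^ 3 - 10 * d ^ 2 + 5 * d + 1
  have hQ : N ^ 2 - 3 * N * B + 9 * B ^ 2 = 49 * (d ^ 2 - d + 1) ^ 3 := by ring
  have hR : N ^ 2 + 229 * N * B + 505 * B ^ 2 = 2401 * P := by ring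
  have hS : N - 8 * B = 49 * d * (d - 1) := by ring
  rw [j7Map_div N hB, hQ, hR, hS,
    show 49 * (d ^ 2 - d + 1) ^ 3 * (2401 * P) ^ 3 = 7 ^ 14 * ((d ^ 2 - d + 1) ^ 3 * P ^ 3) by ring,
    show B * (49 * d * (d - 1)) ^ 7 = 7 ^ 14 * (B * (d - 1) ^ 7 * d ^ 7) by ring,
    mul_div_mul_left _ _ (pow_ne_zero 14 h7)]

end

/-- With `z = (8d^3 - 15d^2 - 9d + 8)/(d^3 - 8d^2 + 5d + 1)` in `ℚ(d)`, one has
`(z^2-3z+9)(z^2+229z+505)^3/(z-8)^7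
  = (d^2-d+1)^3 (d^6-11d^5+30d^4-15d^3-10d^2+5d+1)^3 / ((d^3-8d^2+5d+1)(d-1)^7 d^7)`,
which is the `j`-invariant of the Tate normal form for a point of order 7. -/
theorem j7_identity :
    let d : RatFunc ℚ := RatFunc.X
    let z : RatFunc ℚ := (8 * d ^ 3 - 15 * d ^ 2 - 9 * d + 8) / (d ^ 3 - 8 * d ^ 2 + 5 * d + 1)
    (z ^ 2 - 3 * z + 9) * (z ^ 2 + 229 * z + 505) ^ 3 / (z - 8) ^ 7
      = (d ^ 2 - d + 1) ^ 3
          * (d ^ 6 - 11 * d ^ 5 + 30 * d ^ 4 - 15 * d ^ 3 - 10 * d ^ 2 + 5 * d + 1) ^ 3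
          / ((d ^ 3 - 8 * d ^ 2 + 5 * d + 1) * (d - 1) ^ 7 * d ^ 7) := by
  intro d z
  have hB : d ^ 3 - 8 * d ^ 2 + 5 * d + 1 ≠ 0 := by
    have hp : (X ^ 3 - 8 * X ^ 2 + 5 * X + 1 : ℚ[X]) ≠ 0 := fun h ↦ by
      simpa using congrArg (eval 0) h
    simpa [map_ofNat] using RatFunc.algebraMap_ne_zero hp
  exact j7Map_tate7 (by norm_num) hB
end

section
/- Over ℚ(z), the quadratic R_2(X, 16(z+1)^4/(z(z-1)^2)) in X factors as (X - 256(z^2-z+1)^3/(z^2(z-1)^2)) · (X - 16(z^2+14z+1)^3/(z(z-1)^4)). -/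
open Polynomial

/-! By Vieta it suffices to check that the two proposed roots have sum `Y² - 207Y + 3456` and
product `(Y + 144)³`; both are identities of rational functions in `z`, valid in any field
as soon as `z ≠ 0` and `z ≠ 1`. -/

theorem Polynomial.X_sub_C_mul_X_sub_C {R : Type*} [CommRing R] (a b : R) :
    (X - C a) * (X - C b) = X ^ 2 - C (a + b) * X + C (a * b) := by
  rw [C_add, C_mul]
  ring

theorem RatFunc.X_sub_one_ne_zero (K : Type*) [Field K] : (RatFunc.X : RatFunc K) - 1 ≠ 0 := by
  rw [← RatFunc.algebraMap_X, ← map_one (algebraMap K[X] (RatFunc K)), ← map_sub, ← C_1]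
  exact RatFunc.algebraMap_ne_zero (X_sub_C_ne_zero 1)

section LevelTwo

variable {K : Type*} [Field K] {z : K}

theorem levelTwo_roots_sum (hz : z ≠ 0) (hz1 : z - 1 ≠ 0) :
    (16 * (z + 1) ^ 4 / (z * (z - 1) ^ 2)) ^ 2 - 207 * (16 * (z + 1) ^ 4 / (z * (z - 1) ^ 2))
        + 3456
      = 256 * (z ^ 2 - z + 1) ^ 3 / (z ^ 2 * (z - 1) ^ 2)
          + 16 * (z ^ 2 + 14 * z + 1) ^ 3 / (z * (z - 1) ^ 4) := by
  field_simp
  ring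

theorem levelTwo_roots_mul (hz : z ≠ 0) (hz1 : z - 1 ≠ 0) :
    (16 * (z + 1) ^ 4 / (z * (z - 1) ^ 2) + 144) ^ 3
      = 256 * (z ^ 2 - z + 1) ^ 3 / (z ^ 2 * (z - 1) ^ 2)
          * (16 * (z ^ 2 + 14 * z + 1) ^ 3 / (z * (z - 1) ^ 4)) := by
  field_simp
  ring

end LevelTwo

/-- Over `ℚ(z)`, `R_2(X, 16(z+1)^4/(z(z-1)^2))` factors as
`(X - 256(z^2-z+1)^3/(z^2(z-1)^2)) * (X - 16(z^2+14z+1)^3/(z(z-1)^4))`. -/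
theorem R2_factorization :
    let z : RatFunc ℚ := RatFunc.X
    let Y : RatFunc ℚ := 16 * (z + 1) ^ 4 / (z * (z - 1) ^ 2)
    (X ^ 2 - C (Y ^ 2 - 207 * Y + 3456) * X + C ((Y + 144) ^ 3) : Polynomial (RatFunc ℚ))
      = (X - C (256 * (z ^ 2 - z + 1) ^ 3 / (z ^ 2 * (z - 1) ^ 2)))
          * (X - C (16 * (z ^ 2 + 14 * z + 1) ^ 3 / (z * (z - 1) ^ 4))) := by
  intro z Y
  have hz : z ≠ 0 := RatFunc.X_ne_zero
  have hz1 : z - 1 ≠ 0 := RatFunc.X_sub_one_ne_zero ℚ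
  rw [X_sub_C_mul_X_sub_C, levelTwo_roots_sum hz hz1, levelTwo_roots_mul hz hz1]
end

section
/- Over the rational function field ℚ(z), R_3(X, z^6/(z^3-27)) factors as (X - z^3(z^3-24)^3/(z^3-27)) · (X - z^3(z^3+216)^3/(z^3-27)^3). -/
open Polynomial

theorem RatFunc.X_pow_sub_C_ne_zero {K : Type*} [Field K] {n : ℕ} (hn : 0 < n) (a : K) :
    (RatFunc.X : RatFunc K) ^ n - RatFunc.C a ≠ 0 := by
  rw [← RatFunc.algebraMap_X, ← RatFunc.algebraMap_C, ← map_pow, ← map_sub]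
  exact RatFunc.algebraMap_ne_zero (Polynomial.X_pow_sub_C_ne_zero hn a)

section RootIdentities

variable {K : Type*} [Field K] {w : K}

theorem R3_roots_add (hw : w - 27 ≠ 0) :
    w ^ 2 / (w - 27) * ((w ^ 2 / (w - 27)) ^ 2 - 126 * (w ^ 2 / (w - 27)) + 2944)
      = w * (w - 24) ^ 3 / (w - 27) + w * (w + 216) ^ 3 / (w - 27) ^ 3 := by
  field_simp
  ring

theorem R3_roots_mul (hw : w - 27 ≠ 0) :
    w ^ 2 / (w - 27) * (w ^ 2 / (w - 27) + 192) ^ 3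
      = w * (w - 24) ^ 3 / (w - 27) * (w * (w + 216) ^ 3 / (w - 27) ^ 3) := by
  field_simp
  ring

end RootIdentities

/-- Over `ℚ(z)`, `R_3(X, z^6/(z^3-27))` factors as
`(X - z^3(z^3-24)^3/(z^3-27)) * (X - z^3(z^3+216)^3/(z^3-27)^3)`. -/
theorem R3_factorization :
    let z : RatFunc ℚ := RatFunc.X
    let Y : RatFunc ℚ := z ^ 6 / (z ^ 3 - 27)
    (X ^ 2 - C (Y * (Y ^ 2 - 126 * Y + 2944)) * X + C (Y * (Y + 192) ^ 3)
        : Polynomial (RatFunc ℚ))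
      = (X - C (z ^ 3 * (z ^ 3 - 24) ^ 3 / (z ^ 3 - 27)))
          * (X - C (z ^ 3 * (z ^ 3 + 216) ^ 3 / (z ^ 3 - 27) ^ 3)) := by
  intro z Y
  have hw : z ^ 3 - 27 ≠ 0 := by
    simpa using RatFunc.X_pow_sub_C_ne_zero (K := ℚ) three_pos 27
  have hY : Y = (z ^ 3) ^ 2 / (z ^ 3 - 27) := by rw [← pow_mul]
  rw [X_sub_C_mul_X_sub_C, hY, R3_roots_add hw, R3_roots_mul hw]
end
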